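/- arXiv:math/0302252 — 10 statements merged into one kernel-verified Lean document; each statement's English description precedes it below -/
import Mathlib

section
/- If u and v are sorted words over X such that u is a factor of v, then for every letter x, either u is a factor of S(v·x) or S(u·x) is a factor of S(v·x), where v·x denotes the word v with the letter x appended. -/
variable {X : Type*} [LinearOrder X]

/-- The canonical projection from words to monomials (exponent vectors). -/
noncomputable def piW (w : List X) : X →₀ ℕ := Multiset.toFinsupp (↑w : Multiset X)

/-- The section sending a monomial to the unique sorted word in its fiber. -/
noncomputable def sigmaW (m : X →₀ ℕ) : List X := (Finsupp.toMultiset m).sort (· ≤ ·)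

/-- The sorting map on words. -/
noncomputable def sortW (w : List X) : List X := sigmaW (piW w)

/-- The two-sided ideal of the free monoid generated by a set of words. -/
def wordIdeal (T : Set (List X)) : Set (List X) := {v | ∃ t ∈ T, t <:+: v}

/-- The ideal of the free commutative monoid generated by a set of monomials. -/
def monIdeal (M : Set (X →₀ ℕ)) : Set (X →₀ ℕ) := {v | ∃ m ∈ M, m ≤ v}

/-- `I(M)`, the ideal of the free monoid generated by the sorted words of members of `M`. -/
def IM (M : Set (X →₀ ℕ)) : Set (List X) := wordIdeal (sigmaW '' M)

/-- A letter is extremal in a monomial if it is the least or greatest letter of its support. -/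
def Extremal (w : X →₀ ℕ) (x : X) : Prop :=
  x ∈ w.support ∧ ((∀ y ∈ w.support, x ≤ y) ∨ (∀ y ∈ w.support, y ≤ x))

/-- A letter is internal to a monomial if it lies strictly between its extremal letters. -/
def Internal (w : X →₀ ℕ) (x : X) : Prop :=
  (∃ a ∈ w.support, a < x) ∧ (∃ b ∈ w.support, x < b)

/-- A set of monomials is an antichain if no member divides another. -/
def IsMonAntichain (M : Set (X →₀ ℕ)) : Prop := ∀ u ∈ M, ∀ v ∈ M, u ≤ v → u = v

/-- An ideal of the free monoid is finitely generated. -/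
def FGIdeal (J : Set (List X)) : Prop := ∃ T : Set (List X), T.Finite ∧ wordIdeal T = J

lemma sortW_perm (w : List X) : (sortW w).Perm w := by
  simp only [sortW, sigmaW, piW, Multiset.toFinsupp_toMultiset, Multiset.coe_sort]
  exact w.mergeSort_perm _

lemma sortW_sorted (w : List X) : (sortW w).Pairwise (· ≤ ·) :=
  Multiset.pairwise_sort _ _

lemma sortW_append_single (v : List X) (hv : v.Pairwise (· ≤ ·)) (x : X) :
    sortW (v ++ [x]) = v.orderedInsert (· ≤ ·) x := by
  refine List.Perm.eq_of_pairwise' (sortW_sorted _) (hv.orderedInsert x v) ?_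
  exact ((sortW_perm _).trans (List.perm_append_comm)).trans
    (List.perm_orderedInsert _ x v).symm


/-- If `u` and `v` are sorted words with `u` a factor of `v`, then for any letter `x`,
either `u` is a factor of `S(v·x)` or `S(u·x)` is a factor of `S(v·x)`. -/
theorem stmt0 (u v : List X) (hu : u.Pairwise (· ≤ ·)) (hv : v.Pairwise (· ≤ ·))
    (huv : u <:+: v) (x : X) :
    u <:+: sortW (v ++ [x]) ∨ sortW (u ++ [x]) <:+: sortW (v ++ [x]) := by
  rw [sortW_append_single v hv x, sortW_append_single u hu x]
  obtain ⟨a, b, rfl⟩ := huv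
  rw [List.orderedInsert_eq_take_drop]
  set p : X → Bool := fun b => ¬x ≤ b with hp
  by_cases ha : ∀ y ∈ a, p y
  · by_cases hu2 : ∀ y ∈ u, p y
    · -- x goes after u: u remains a factor
      left
      have h1 : (a ++ u ++ b).takeWhile p = a ++ u ++ b.takeWhile p := by
        rw [List.append_assoc, List.takeWhile_append_of_pos ha,
          List.takeWhile_append_of_pos hu2, List.append_assoc]
      rw [h1]
      exact ⟨a, b.takeWhile p ++ x :: (a ++ u ++ b).dropWhile p, by simp⟩
    · -- x goes inside u
      right
      have hne : u.takeWhile p ≠ u := fun h => hu2 (List.takeWhile_eq_self_iff.mp h)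
      have h1 : (a ++ u ++ b).takeWhile p = a ++ u.takeWhile p := by
        rw [List.append_assoc, List.takeWhile_append_of_pos ha, List.takeWhile_append]
        rw [if_neg]
        intro h
        exact hne ((List.takeWhile_prefix p).eq_of_length h)
      have h2 : (a ++ u ++ b).dropWhile p = u.dropWhile p ++ b := by
        rw [List.append_assoc, List.dropWhile_append_of_pos ha, List.dropWhile_append]
        rw [if_neg]
        intro h
        rw [List.isEmpty_iff, List.dropWhile_eq_nil_iff] at h
        exact hu2 h
      rw [h1, h2, List.orderedInsert_eq_take_drop]
      refine ⟨a, b, ?_⟩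
      have : ∀ q : X → Bool, q = p →
          a ++ (u.takeWhile q ++ x :: u.dropWhile q) ++ b =
            a ++ u.takeWhile p ++ x :: (u.dropWhile p ++ b) := by
        rintro q rfl; simp
      exact this _ (by funext b; simp [hp])
  · -- x ≤ some letter of a: u is a factor of the dropWhile part
    left
    push_neg at ha
    obtain ⟨y, hy, hpy⟩ := ha
    have hxy : x ≤ y := by simpa [hp] using hpy
    have hyz : ∀ z ∈ u ++ b, ¬ p z := by
      intro z hz
      have : y ≤ z := by
        rw [List.append_assoc] at hv
        exact (List.pairwise_append.mp hv).2.2 y hy z hz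
      simp [hp, le_trans hxy this]
    have h2 : (a ++ u ++ b).dropWhile p = a.dropWhile p ++ (u ++ b) := by
      rw [List.append_assoc, List.dropWhile_append, if_neg]
      intro h
      rw [List.isEmpty_iff, List.dropWhile_eq_nil_iff] at h
      exact (by simpa [hp] using h y hy : ¬ x ≤ y) hxy
    rw [h2]
    exact ⟨(a ++ u ++ b).takeWhile p ++ x :: a.dropWhile p, b, by simp⟩
end

section
/- Let T be a set of sorted words over X such that for every t in T and every letter x, the word S(t·x) has a factor in T. Then there exists an ideal I of [X] (a set of monomials closed under multiplication by arbitrary monomials) such that T ⊆ σ(I) and the ideal of X* generated by T equals the ideal of X* generated by σ(I). -/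
variable {X : Type*} [LinearOrder X]

lemma coe_sigmaW (m : X →₀ ℕ) : (↑(sigmaW m) : Multiset X) = Finsupp.toMultiset m :=
  Multiset.sort_eq _ _

lemma sigmaW_sorted (m : X →₀ ℕ) : (sigmaW m).Pairwise (· ≤ ·) := Multiset.pairwise_sort _ _

lemma sort_unique (L : List X) (hL : L.Pairwise (· ≤ ·)) (M : Multiset X)
    (h : (↑L : Multiset X) = M) : L = M.sort (· ≤ ·) := by
  refine List.Perm.eq_of_pairwise' hL (Multiset.pairwise_sort _ _) ?_
  exact Multiset.coe_eq_coe.mp (by rw [Multiset.sort_eq, h])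

lemma toMultiset_piW (w : List X) : Finsupp.toMultiset (piW w) = (↑w : Multiset X) :=
  Multiset.toFinsupp_toMultiset _

lemma sigmaW_piW (t : List X) (ht : t.Pairwise (· ≤ ·)) : sigmaW (piW t) = t :=
  (sort_unique t ht _ (toMultiset_piW t).symm).symm

lemma key (T : Set (List X)) (hsorted : ∀ t ∈ T, t.Pairwise (· ≤ ·))
    (hfac : ∀ t ∈ T, ∀ x : X, ∃ s ∈ T, s <:+: sortW (t ++ [x])) :
    ∀ (U : Multiset X), ∀ t ∈ T, ∃ s ∈ T,
      s <:+: Multiset.sort ((↑t : Multiset X) + U) (· ≤ ·) := by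
  intro U
  induction U using Multiset.induction_on with
  | empty =>
    intro t ht
    exact ⟨t, ht, by rw [add_zero, ← sort_unique t (hsorted t ht) _ rfl]⟩
  | cons x U ih =>
    intro t ht
    obtain ⟨s, hs, a, b, hab⟩ := ih t ht
    have hws : (a ++ s ++ b).Pairwise (· ≤ ·) := by
      rw [hab]; exact Multiset.pairwise_sort _ _
    have hcoe : (↑(a ++ s ++ b) : Multiset X) = ↑t + U := by
      rw [hab, Multiset.sort_eq]
    simp only [List.pairwise_append, List.mem_append] at hws
    obtain ⟨⟨ha, hss, has⟩, hb, habb⟩ := hws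
    have has' : ∀ p ∈ a, ∀ q ∈ s, p ≤ q := has
    have hab' : ∀ p ∈ a, ∀ q ∈ b, p ≤ q := fun p hp q hq => habb p (Or.inl hp) q hq
    have hsb' : ∀ p ∈ s, ∀ q ∈ b, p ≤ q := fun p hp q hq => habb p (Or.inr hp) q hq
    have hgoal : (↑t : Multiset X) + (x ::ₘ U) = x ::ₘ ((↑a : Multiset X) + ↑s + ↑b) := by
      have : ((↑a : Multiset X) + ↑s + ↑b) = ↑t + U := by
        simpa using hcoe
      rw [this]
      rw [Multiset.add_cons]
    by_cases hbx : ∃ y ∈ b, y < x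
    · -- insert x into b
      obtain ⟨y, hy, hyx⟩ := hbx
      set L := a ++ s ++ (List.orderedInsert (· ≤ ·) x b) with hL
      have hLs : L.Pairwise (· ≤ ·) := by
        simp only [hL, List.pairwise_append, List.mem_append]
        refine ⟨⟨ha, hss, has'⟩, List.Pairwise.orderedInsert x b hb, ?_⟩
        intro p hp q hq
        rcases (List.mem_orderedInsert _).mp hq with rfl | hq
        · cases hp with
          | inl hp => exact le_of_lt (lt_of_le_of_lt (hab' p hp y hy) hyx)
          | inr hp => exact le_of_lt (lt_of_le_of_lt (hsb' p hp y hy) hyx)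
        · cases hp with
          | inl hp => exact hab' p hp q hq
          | inr hp => exact hsb' p hp q hq
      have hLc : (↑L : Multiset X) = (↑t : Multiset X) + (x ::ₘ U) := by
        rw [hgoal]
        have : (↑(List.orderedInsert (· ≤ ·) x b) : Multiset X) = x ::ₘ ↑b :=
          Multiset.coe_eq_coe.mpr (List.perm_orderedInsert _ _ _)
        simp only [hL, List.append_assoc, ← Multiset.coe_add, this,
          Multiset.add_cons, Multiset.cons_inj_right]
        simp [add_assoc]
      exact ⟨s, hs, ⟨a, List.orderedInsert (· ≤ ·) x b,
        by rw [← hL]; exact sort_unique L hLs _ hLc⟩⟩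
    · push_neg at hbx
      by_cases hxs : ∃ y ∈ s, y ≤ x
      · -- use hfac on s and x
        obtain ⟨y, hy, hyx⟩ := hxs
        obtain ⟨s', hs', hinf⟩ := hfac s hs x
        set s₂ := sortW (s ++ [x]) with hs₂
        have hs₂c : (↑s₂ : Multiset X) = x ::ₘ ↑s := by
          rw [hs₂, sortW, coe_sigmaW, toMultiset_piW]
          simp [Multiset.add_cons]
        have hs₂mem : ∀ q ∈ s₂, q = x ∨ q ∈ s := by
          intro q hq
          have : q ∈ (↑s₂ : Multiset X) := hq
          rw [hs₂c, Multiset.mem_cons] at this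
          simpa using this
        set L := a ++ s₂ ++ b with hL
        have hLs : L.Pairwise (· ≤ ·) := by
          simp only [hL, List.pairwise_append, List.mem_append]
          refine ⟨⟨ha, sigmaW_sorted _, ?_⟩, hb, ?_⟩
          · intro p hp q hq
            rcases hs₂mem q hq with rfl | hq
            · exact (has' p hp y hy).trans hyx
            · exact has' p hp q hq
          · intro p hp q hq
            cases hp with
            | inl hp => exact hab' p hp q hq
            | inr hp =>
              rcases hs₂mem p hp with rfl | hp
              · exact hbx q hq
              · exact hsb' p hp q hq
        have hLc : (↑L : Multiset X) = (↑t : Multiset X) + (x ::ₘ U) := by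
          rw [hgoal]
          simp only [hL, ← Multiset.coe_add, hs₂c, Multiset.add_cons, Multiset.cons_add,
            Multiset.cons_inj_right]
        refine ⟨s', hs', hinf.trans ?_⟩
        refine List.IsInfix.trans ⟨a, b, rfl⟩ ?_
        rw [← hL, sort_unique L hLs _ hLc]
      · push_neg at hxs
        -- insert x into a
        set L := (List.orderedInsert (· ≤ ·) x a) ++ s ++ b with hL
        have hamem : ∀ q ∈ List.orderedInsert (· ≤ ·) x a, q = x ∨ q ∈ a :=
          fun q hq => (List.mem_orderedInsert _).mp hq
        have hLs : L.Pairwise (· ≤ ·) := by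
          simp only [hL, List.pairwise_append, List.mem_append]
          refine ⟨⟨List.Pairwise.orderedInsert x a ha, hss, ?_⟩, hb, ?_⟩
          · intro p hp q hq
            rcases hamem p hp with rfl | hp
            · exact le_of_lt (hxs q hq)
            · exact has' p hp q hq
          · intro p hp q hq
            cases hp with
            | inl hp =>
              rcases hamem p hp with rfl | hp
              · exact hbx q hq
              · exact hab' p hp q hq
            | inr hp => exact hsb' p hp q hq
        have hLc : (↑L : Multiset X) = (↑t : Multiset X) + (x ::ₘ U) := by
          rw [hgoal]
          have : (↑(List.orderedInsert (· ≤ ·) x a) : Multiset X) = x ::ₘ ↑a :=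
            Multiset.coe_eq_coe.mpr (List.perm_orderedInsert _ _ _)
          simp only [hL, ← Multiset.coe_add, this, Multiset.cons_add]
        exact ⟨s, hs, ⟨List.orderedInsert (· ≤ ·) x a, b,
          by rw [← hL]; exact sort_unique L hLs _ hLc⟩⟩

/-- If every `S(t·x)` with `t ∈ T`, `x` a letter, has a factor in the set `T` of sorted
words, then `T` generates the same word ideal as `σ(I)` for some monomial ideal `I`
with `T ⊆ σ(I)`. -/
theorem stmt1 (T : Set (List X)) (hsorted : ∀ t ∈ T, t.Pairwise (· ≤ ·))
    (hfac : ∀ t ∈ T, ∀ x : X, ∃ s ∈ T, s <:+: sortW (t ++ [x])) :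
    ∃ I : Set (X →₀ ℕ), (∀ m ∈ I, ∀ u : X →₀ ℕ, m + u ∈ I) ∧
      T ⊆ sigmaW '' I ∧ wordIdeal T = wordIdeal (sigmaW '' I) := by
  refine ⟨{m | ∃ t ∈ T, piW t ≤ m}, ?_, ?_, ?_⟩
  · rintro m ⟨t, ht, hle⟩ u
    exact ⟨t, ht, hle.trans le_self_add⟩
  · intro t ht
    exact ⟨piW t, ⟨t, ht, le_rfl⟩, sigmaW_piW t (hsorted t ht)⟩
  · ext v
    constructor
    · rintro ⟨t, ht, hinf⟩
      exact ⟨sigmaW (piW t), ⟨piW t, ⟨t, ht, le_rfl⟩, rfl⟩,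
        by rwa [sigmaW_piW t (hsorted t ht)]⟩
    · rintro ⟨w, ⟨m, ⟨t, ht, hle⟩, rfl⟩, hinf⟩
      obtain ⟨u, rfl⟩ := le_iff_exists_add.mp hle
      have : sigmaW (piW t + u) =
          Multiset.sort ((↑t : Multiset X) + Finsupp.toMultiset u) (· ≤ ·) := by
        rw [sigmaW, Finsupp.toMultiset_add, toMultiset_piW]
      obtain ⟨s, hsT, hsi⟩ := key T hsorted hfac (Finsupp.toMultiset u) t ht
      exact ⟨s, hsT, hsi.trans (this ▸ hinf)⟩
end

section
/- Let M be an antichain of monomials over X such that I(M) is finitely generated. Then for every natural number k, the ideal I(M_k) is finitely generated, where M_k is the set of members of M whose support has size at most k. -/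
variable {X : Type*} [LinearOrder X]

theorem piW_sigmaW (m : X →₀ ℕ) : piW (sigmaW m) = m := by
  simp [piW, sigmaW]

theorem piW_le_of_infix {u v : List X} (h : u <:+: v) : piW u ≤ piW v :=
  Multiset.toFinsupp_strictMono.monotone (Multiset.coe_le.mpr h.sublist.subperm)

theorem finite_of_fgIdeal (M : Set (X →₀ ℕ)) (hM : IsMonAntichain M)
    (hfg : FGIdeal (IM M)) : M.Finite := by
  obtain ⟨T, hTfin, hTeq⟩ := hfg
  -- each sigmaW m for m ∈ M lies in T
  have key : ∀ m ∈ M, sigmaW m ∈ T := by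
    intro m hm
    have h1 : sigmaW m ∈ IM M := ⟨sigmaW m, ⟨m, hm, rfl⟩, List.infix_rfl⟩
    rw [← hTeq] at h1
    obtain ⟨t, htT, hti⟩ := h1
    have h2 : t ∈ IM M := by
      rw [← hTeq]; exact ⟨t, htT, List.infix_rfl⟩
    obtain ⟨s, ⟨m', hm', rfl⟩, hsi⟩ := h2
    have hmm : m' = m := by
      apply hM m' hm' m hm
      have := piW_le_of_infix (hsi.trans hti)
      rwa [piW_sigmaW, piW_sigmaW] at this
    subst hmm
    have : sigmaW m' = t := hsi.sublist.antisymm hti.sublist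
    rw [this]; exact htT
  have himg : sigmaW '' M ⊆ T := by rintro _ ⟨m, hm, rfl⟩; exact key m hm
  have hinj : Set.InjOn sigmaW M := by
    intro a _ b _ hab
    have := congrArg piW hab
    rwa [piW_sigmaW, piW_sigmaW] at this
  exact ((hTfin.subset himg).of_finite_image hinj)

/-- If `I(M)` is finitely generated, so is `I(M_k)`, where `M_k` consists of the members
of `M` with support of size at most `k`. -/
theorem stmt6 (M : Set (X →₀ ℕ)) (hM : IsMonAntichain M) (hfg : FGIdeal (IM M)) (k : ℕ) :
    FGIdeal (IM {w ∈ M | w.support.card ≤ k}) := by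
  have hfin : M.Finite := finite_of_fgIdeal M hM hfg
  exact ⟨sigmaW '' {w ∈ M | w.support.card ≤ k},
    ((hfin.subset (Set.sep_subset _ _)).image _), rfl⟩
end

section
/- Let w ↦ ŵ be a bijection between sets M and M̂ of monomials over X such that: (i) for every w in M, supp(w) = supp(ŵ), and (ii) for all u, v in M and every letter x, ∂_x u < ∂_x v if and only if ∂_x û < ∂_x v̂. Then a linear order on X is cool for M if and only if it is cool for M̂. -/
variable {X : Type*}

/-- A letter is extremal in a monomial (w.r.t. the linear order `r`) if it is the
least or greatest letter of its support. -/
def ExtremalO (r : LinearOrder X) (w : X →₀ ℕ) (x : X) : Prop :=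
  x ∈ w.support ∧ ((∀ y ∈ w.support, r.le x y) ∨ (∀ y ∈ w.support, r.le y x))

/-- A letter is internal to a monomial (w.r.t. the linear order `r`) if it lies strictly
between its extremal letters. -/
def InternalO (r : LinearOrder X) (w : X →₀ ℕ) (x : X) : Prop :=
  (∃ a ∈ w.support, r.lt a x) ∧ (∃ b ∈ w.support, r.lt x b)

/-- A linear order `r` on the letters is cool for a set `M` of monomials if for every
`w ∈ M` and letter `x` internal to `w` there is `s ∈ M` with `x` extremal in `s` and
`s/x` dividing `w`. -/
def Cool (r : LinearOrder X) (M : Set (X →₀ ℕ)) : Prop :=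
  ∀ w ∈ M, ∀ x : X, InternalO r w x → ∃ s ∈ M, ExtremalO r s x ∧ Finsupp.erase x s ≤ w

theorem cool_aux (M Mh : Set (X →₀ ℕ)) (f : (X →₀ ℕ) → (X →₀ ℕ))
    (hmaps : Set.MapsTo f M Mh) (hsurj : Set.SurjOn f M Mh)
    (hsupp : ∀ w ∈ M, (f w).support = w.support)
    (hord : ∀ u ∈ M, ∀ v ∈ M, ∀ x : X, (u x < v x ↔ f u x < f v x))
    (r : LinearOrder X) (hc : Cool r M) : Cool r Mh := by
  intro wh hwh x hint
  obtain ⟨w, hw, rfl⟩ := hsurj hwh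
  rw [InternalO, hsupp w hw] at hint
  obtain ⟨s, hs, hext, hle⟩ := hc w hw x hint
  refine ⟨f s, hmaps hs, ?_, ?_⟩
  · rwa [ExtremalO, hsupp s hs]
  · intro y
    by_cases hyx : y = x
    · simp [hyx, Finsupp.erase_same]
    · rw [Finsupp.erase_ne hyx]
      have h1 : s y ≤ w y := by simpa [Finsupp.erase_ne hyx] using hle y
      have := (hord w hw s hs y).not
      simp only [not_lt] at this
      exact this.mp h1

/-- If a bijection `w ↦ ŵ` between `M` and `M̂` preserves supports and strict exponent
comparisons, then a linear order is cool for `M` iff it is cool for `M̂`. -/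
theorem stmt8 (M Mh : Set (X →₀ ℕ)) (f : (X →₀ ℕ) → (X →₀ ℕ))
    (hbij : Set.BijOn f M Mh)
    (hsupp : ∀ w ∈ M, (f w).support = w.support)
    (hord : ∀ u ∈ M, ∀ v ∈ M, ∀ x : X, (u x < v x ↔ f u x < f v x))
    (r : LinearOrder X) :
    Cool r M ↔ Cool r Mh := by
  constructor
  · exact cool_aux M Mh f hbij.mapsTo hbij.surjOn hsupp hord r
  · set g := Function.invFunOn f M with hg
    have hinv : Set.InvOn g f M Mh := hbij.invOn_invFunOn
    have hgbij : Set.BijOn g Mh M := Set.BijOn.symm hinv.symm hbij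
    have hfg : ∀ w ∈ Mh, f (g w) = w := fun w hw => hinv.2 hw
    refine cool_aux Mh M g hgbij.mapsTo hgbij.surjOn ?_ ?_ r
    · intro w hw
      rw [← hsupp (g w) (hgbij.mapsTo hw), hfg w hw]
    · intro u hu v hv x
      rw [hord (g u) (hgbij.mapsTo hu) (g v) (hgbij.mapsTo hv) x, hfg u hu, hfg v hv]
end

section
/- Let ≺ be a linear order on X that is cool for a set M of monomials, and let N ⊆ M be such that every member of M that helps some member of N with some letter belongs to N. Then ≺ is cool for N. -/
variable {X : Type*}

/-- `w` helps `m` with the letter `x`. -/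
def Helps (w m : X →₀ ℕ) (x : X) : Prop :=
  x ∈ w.support ∧ Finsupp.erase x w ≤ m ∧
    (Finsupp.erase x w).support ⊂ (Finsupp.erase x m).support

/-- A cool order for `M` is cool for any `N ⊆ M` containing every member of `M` that
helps some member of `N` with some letter. -/
theorem stmt9 (r : LinearOrder X) (M N : Set (X →₀ ℕ)) (hcool : Cool r M) (hNM : N ⊆ M)
    (hclosed : ∀ w ∈ M, (∃ m ∈ N, ∃ x : X, Helps w m x) → w ∈ N) :
    Cool r N := by
  letI := r
  intro w hw x hx
  obtain ⟨s, hsM, hext, hle⟩ := hcool w (hNM hw) x hx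
  obtain ⟨hxs, hor⟩ := hext
  obtain ⟨⟨a, ha, hax⟩, ⟨b, hb, hxb⟩⟩ := hx
  have hsub : (Finsupp.erase x s).support ⊆ (Finsupp.erase x w).support := by
    intro y hy
    rw [Finsupp.support_erase, Finset.mem_erase] at hy ⊢
    refine ⟨hy.1, ?_⟩
    have h1 : s y ≠ 0 := Finsupp.mem_support_iff.mp hy.2
    have h2 : (Finsupp.erase x s) y ≤ w y := hle y
    rw [Finsupp.erase_ne hy.1] at h2
    exact Finsupp.mem_support_iff.mpr (fun h0 => h1 (Nat.le_zero.mp (h0 ▸ h2)))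
  have hne : (Finsupp.erase x s).support ≠ (Finsupp.erase x w).support := by
    rcases hor with hlo | hhi
    · intro heq
      have hax' : a ∈ (Finsupp.erase x w).support := by
        rw [Finsupp.support_erase, Finset.mem_erase]
        exact ⟨fun h => (lt_iff_le_not_ge.mp hax).2 (h ▸ le_refl a), ha⟩
      rw [← heq, Finsupp.support_erase, Finset.mem_erase] at hax'
      exact (lt_iff_le_not_ge.mp hax).2 (hlo a hax'.2)
    · intro heq
      have hbx' : b ∈ (Finsupp.erase x w).support := by
        rw [Finsupp.support_erase, Finset.mem_erase]
        exact ⟨fun h => (lt_iff_le_not_ge.mp hxb).2 (h ▸ le_refl b), hb⟩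
      rw [← heq, Finsupp.support_erase, Finset.mem_erase] at hbx'
      exact (lt_iff_le_not_ge.mp hxb).2 (hhi b hbx'.2)
  exact ⟨s, hclosed s hsM ⟨w, hw, x, hxs, hle, hsub, fun h => hne (le_antisymm hsub h)⟩,
    ⟨hxs, hor⟩, hle⟩
end

section
/- Suppose M is an antichain of monomials over X, w ∈ M, and the letter x satisfies ∂_x w ≥ ∂_x u for every u in M (x occurs in w with the largest exponent it has in any member of M). Then for every linear order ≺ on X that is cool for M, x is not internal to w with respect to ≺. -/
variable {X : Type*}

theorem Finsupp.le_of_erase_le {ι M : Type*} [Zero M] [LE M] {f g : ι →₀ M} {i : ι}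
    (herase : f.erase i ≤ g) (hi : f i ≤ g i) : f ≤ g := by
  intro j
  by_cases hj : j = i
  · exact hj ▸ hi
  · simpa only [Finsupp.erase_ne hj] using herase j

theorem not_internalO_of_extremalO {r : LinearOrder X} {w : X →₀ ℕ} {x : X}
    (hext : ExtremalO r w x) : ¬ InternalO r w x := by
  rintro ⟨⟨a, ha, hax⟩, ⟨b, hb, hxb⟩⟩
  rcases hext.2 with hleast | hgreatest
  · exact ((r.lt_iff_le_not_ge _ _).mp hax).2 (hleast a ha)
  · exact ((r.lt_iff_le_not_ge _ _).mp hxb).2 (hgreatest b hb)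

/-- If `x` occurs in `w ∈ M` with its largest exponent over the antichain `M`, then in
any cool ordering for `M` the letter `x` is not internal to `w`. -/
theorem stmt11 (M : Set (X →₀ ℕ)) (hM : IsMonAntichain M) (w : X →₀ ℕ) (hw : w ∈ M)
    (x : X) (hmax : ∀ u ∈ M, u x ≤ w x) (r : LinearOrder X) (hcool : Cool r M) :
    ¬ InternalO r w x := by
  intro hint
  obtain ⟨s, hs, hext, herase⟩ := hcool w hw x hint
  have hsw : s = w := hM s hs w hw (Finsupp.le_of_erase_le herase (hmax s hs))
  exact not_internalO_of_extremalO (hsw ▸ hext) hint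
end

section
/- Let M be an antichain of square-free monomials over X (every exponent in every member of M is at most 1). If some linear order on X is cool for M, then every member of M has total degree at most 2. -/
variable {X : Type*}

/-- If a square-free antichain admits a cool ordering then all its members have total
degree at most `2`. -/
theorem stmt12 (M : Set (X →₀ ℕ)) (hM : IsMonAntichain M)
    (hsf : ∀ w ∈ M, ∀ x : X, w x ≤ 1)
    (hcool : ∃ r : LinearOrder X, Cool r M) :
    ∀ w ∈ M, (w.sum fun _ e => e) ≤ 2 := by
  obtain ⟨r, hc⟩ := hcool
  letI := r
  intro w hw
  by_contra h
  push_neg at h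
  have hcard : 3 ≤ w.support.card := by
    have hle : (w.sum fun _ e => e) ≤ w.support.card := by
      rw [Finsupp.sum]
      calc ∑ x ∈ w.support, w x ≤ ∑ _x ∈ w.support, 1 :=
            Finset.sum_le_sum (fun x _ => hsf w hw x)
        _ = w.support.card := by simp
    omega
  have hne : w.support.Nonempty := by rw [← Finset.card_pos]; omega
  set a := w.support.min' hne with ha
  set b := w.support.max' hne with hb
  have hsd : (w.support \ {a, b}).Nonempty := by
    rw [← Finset.card_pos]
    have h1 := Finset.card_le_card_sdiff_add_card (s := w.support) (t := {a, b})
    have h2 : ({a, b} : Finset X).card ≤ 2 := Finset.card_le_two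
    omega
  obtain ⟨x, hx⟩ := hsd
  rw [Finset.mem_sdiff, Finset.mem_insert, Finset.mem_singleton] at hx
  push_neg at hx
  obtain ⟨hxs, hxa, hxb⟩ := hx
  have hax : a < x := lt_of_le_of_ne (w.support.min'_le x hxs) (Ne.symm hxa)
  have hxb' : x < b := lt_of_le_of_ne (w.support.le_max' x hxs) hxb
  have hint : InternalO r w x :=
    ⟨⟨a, w.support.min'_mem hne, hax⟩, ⟨b, w.support.max'_mem hne, hxb'⟩⟩
  obtain ⟨s, hs, ⟨hxss, hext⟩, hle⟩ := hc w hw x hint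
  have hsw : s ≤ w := by
    rw [Finsupp.le_def]
    intro y
    by_cases hy : y = x
    · subst hy
      have h1 : s y ≤ 1 := hsf s hs y
      have h2 : 1 ≤ w y := by
        have := Finsupp.mem_support_iff.mp hxs; omega
      omega
    · have := Finsupp.le_def.mp hle y
      rwa [Finsupp.erase_ne hy] at this
  have hseq : s = w := hM s hs w hw hsw
  subst hseq
  rcases hext with h1 | h1
  · exact absurd (h1 a (s.support.min'_mem hne)) (not_le_of_gt hax)
  · exact absurd (h1 b (s.support.max'_mem hne)) (not_le_of_gt hxb')
end

section
/- Let M be a set of quadratic monomials over X. Then: (a) M admits a cool linear order if and only if the graph G(M) admits an acyclic orientation that is transitive at every vertex of T_M; (b) in particular, if M is square-free (contains no monomial of the form x²), then M admits a cool linear order if and only if G(M) admits an acyclic orientation that is transitive at every vertex, i.e. G(M) is a comparability graph. -/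
variable {X : Type*}

/-- The quadratic monomial `xy` (which is `x²` when `x = y`). -/
noncomputable def quadMon (x y : X) : X →₀ ℕ := Finsupp.single x 1 + Finsupp.single y 1

/-- The graph `G(M)` of a set of quadratic monomials: distinct letters `x`, `y` are
adjacent iff the monomial `xy` is not in `M`. -/
def GM (M : Set (X →₀ ℕ)) : SimpleGraph X where
  Adj x y := x ≠ y ∧ quadMon x y ∉ M
  symm := ⟨by
    intro x y ⟨hxy, hmem⟩
    refine ⟨hxy.symm, ?_⟩
    simpa [quadMon, add_comm] using hmem⟩
  loopless := ⟨fun x h => h.1 rfl⟩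

/-- An orientation of a simple graph: each edge gets exactly one of its two directions. -/
structure GraphOrientation (G : SimpleGraph X) where
  dir : X → X → Prop
  dir_adj : ∀ {x y : X}, dir x y → G.Adj x y
  total : ∀ {x y : X}, G.Adj x y → dir x y ∨ dir y x
  asymm : ∀ {x y : X}, dir x y → ¬ dir y x

/-- An orientation is transitive at a vertex `y` if `x→y` and `y→z` force the oriented
edge `x→z`. -/
def TransAt {G : SimpleGraph X} (o : GraphOrientation G) (y : X) : Prop :=
  ∀ x z : X, o.dir x y → o.dir y z → o.dir x z

/-- An orientation is acyclic if it has no directed cycle. -/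
def AcyclicOrientation {G : SimpleGraph X} (o : GraphOrientation G) : Prop :=
  ∀ x : X, ¬ Relation.TransGen o.dir x x


lemma sum_id_zero {m : X →₀ ℕ} (h : m.sum (fun _ e => e) = 0) : m = 0 := by
  ext a
  by_contra h'
  simp only [Finsupp.coe_zero, Pi.zero_apply] at h'
  have ha : a ∈ m.support := Finsupp.mem_support_iff.mpr h'
  have := Finset.single_le_sum (f := fun x => m x) (fun _ _ => Nat.zero_le _) ha
  beta_reduce at this
  rw [Finsupp.sum] at h
  omega

lemma sum_id_one {m : X →₀ ℕ} (h : m.sum (fun _ e => e) = 1) : ∃ a, m = Finsupp.single a 1 := by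
  have hne : m ≠ 0 := by rintro rfl; simp [Finsupp.sum] at h
  obtain ⟨a, ha⟩ := Finsupp.support_nonempty_iff.mpr hne
  have hma : 1 ≤ m a := Nat.one_le_iff_ne_zero.mpr (Finsupp.mem_support_iff.mp ha)
  have hsplit := Finsupp.single_add_erase a m
  have hsum : m a + (m.erase a).sum (fun _ e => e) = 1 := by
    conv_rhs => rw [← h, ← hsplit]
    rw [Finsupp.sum_add_index' (fun _ => rfl) (fun _ _ _ => rfl)]
    simp [Finsupp.sum_single_index]
  have h1 : m a = 1 := by omega
  have h0 : m.erase a = 0 := sum_id_zero (m := m.erase a) (by omega)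
  exact ⟨a, by rw [← hsplit, h1, h0, add_zero]⟩

lemma quad_char {m : X →₀ ℕ} (h : m.sum (fun _ e => e) = 2) : ∃ a b, m = quadMon a b := by
  have hne : m ≠ 0 := by rintro rfl; simp [Finsupp.sum] at h
  obtain ⟨a, ha⟩ := Finsupp.support_nonempty_iff.mpr hne
  have hma : 1 ≤ m a := Nat.one_le_iff_ne_zero.mpr (Finsupp.mem_support_iff.mp ha)
  have hsplit := Finsupp.single_add_erase a m
  have hsum : m a + (m.erase a).sum (fun _ e => e) = 2 := by
    conv_rhs => rw [← h, ← hsplit]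
    rw [Finsupp.sum_add_index' (fun _ => rfl) (fun _ _ _ => rfl)]
    simp [Finsupp.sum_single_index]
  rcases Nat.lt_or_ge (m a) 2 with h1 | h2
  · have h1 : m a = 1 := by omega
    obtain ⟨b, hb⟩ := sum_id_one (m := m.erase a) (by omega)
    exact ⟨a, b, by rw [quadMon, ← hsplit, h1, hb]⟩
  · have h2' : m a = 2 := by omega
    have h0 : m.erase a = 0 := sum_id_zero (m := m.erase a) (by omega)
    refine ⟨a, a, ?_⟩
    rw [quadMon, ← Finsupp.single_add, ← hsplit, h0, add_zero, h2']

lemma quadMon_comm (x y : X) : quadMon x y = quadMon y x := by rw [quadMon, quadMon, add_comm]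

lemma mem_support_quadMon {x y z : X} : z ∈ (quadMon x y).support ↔ z = x ∨ z = y := by
  classical
  rw [Finsupp.mem_support_iff, quadMon, Finsupp.add_apply, Finsupp.single_apply,
    Finsupp.single_apply]
  constructor
  · intro h; by_contra h'; push_neg at h'
    simp [Ne.symm h'.1, Ne.symm h'.2] at h
  · rintro (rfl | rfl) <;> simp

lemma one_le_quadMon_left (x y : X) : 1 ≤ quadMon x y x := by
  classical
  rw [quadMon, Finsupp.add_apply, Finsupp.single_apply]; simp

lemma one_le_quadMon_right (x y : X) : 1 ≤ quadMon x y y := by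
  rw [quadMon_comm]; exact one_le_quadMon_left y x

lemma erase_quadMon_self (x : X) : Finsupp.erase x (quadMon x x) = 0 := by
  rw [quadMon, Finsupp.erase_add, Finsupp.erase_single, add_zero]

lemma erase_quadMon {x a : X} (h : x ≠ a) :
    Finsupp.erase x (quadMon x a) = Finsupp.single a 1 := by
  rw [quadMon, Finsupp.erase_add, Finsupp.erase_single, Finsupp.erase_single_ne h, zero_add]

lemma extremal_quadMon (r : LinearOrder X) (x d : X) : ExtremalO r (quadMon x d) x := by
  refine ⟨mem_support_quadMon.mpr (Or.inl rfl), ?_⟩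
  rcases r.le_total x d with h | h
  · refine Or.inl fun y hy => ?_
    rcases mem_support_quadMon.mp hy with rfl | rfl
    · exact r.le_refl _
    · exact h
  · refine Or.inr fun y hy => ?_
    rcases mem_support_quadMon.mp hy with rfl | rfl
    · exact r.le_refl _
    · exact h

lemma cool_forward (M : Set (X →₀ ℕ)) (hq : ∀ m ∈ M, (m.sum fun _ e => e) = 2)
    (r : LinearOrder X) (hc : Cool r M) :
    ∃ o : GraphOrientation (GM M), AcyclicOrientation o ∧
      ∀ y : X, quadMon y y ∉ M → TransAt o y := by
  letI := r
  refine ⟨⟨fun x y => (GM M).Adj x y ∧ x < y, fun h => h.1, ?_, ?_⟩, ?_, ?_⟩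
  · intro x y h
    rcases lt_trichotomy x y with h' | h' | h'
    · exact Or.inl ⟨h, h'⟩
    · exact absurd h' h.1
    · exact Or.inr ⟨h.symm, h'⟩
  · rintro x y ⟨_, h⟩ ⟨_, h'⟩
    exact absurd h' (not_lt_of_gt h)
  · intro x hx
    have key : ∀ a b : X, Relation.TransGen
        (fun x y => (GM M).Adj x y ∧ x < y) a b → a < b := by
      intro a b h
      induction h with
      | single h => exact h.2
      | tail _ h ih => exact lt_trans ih h.2
    exact lt_irrefl x (key x x hx)
  · rintro y hy x z ⟨hxy, hlt1⟩ ⟨hyz, hlt2⟩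
    have hlt : x < z := lt_trans hlt1 hlt2
    refine ⟨⟨ne_of_lt hlt, ?_⟩, hlt⟩
    intro hmem
    have hint : InternalO r (quadMon x z) y :=
      ⟨⟨x, mem_support_quadMon.mpr (Or.inl rfl), hlt1⟩,
       ⟨z, mem_support_quadMon.mpr (Or.inr rfl), hlt2⟩⟩
    obtain ⟨s, hsM, ⟨hys, _⟩, hle⟩ := hc _ hmem y hint
    obtain ⟨c, d, rfl⟩ := quad_char (hq s hsM)
    have claim : ∀ e : X, quadMon y e ∈ M →
        Finsupp.erase y (quadMon y e) ≤ quadMon x z → False := by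
      intro e heM hle
      by_cases hey : y = e
      · exact hy (hey ▸ heM)
      · rw [erase_quadMon hey] at hle
        have h1 : 1 ≤ quadMon x z e := Finsupp.single_le_iff.mp hle
        have he : e = x ∨ e = z :=
          mem_support_quadMon.mp (Finsupp.mem_support_iff.mpr (by omega))
        rcases he with rfl | rfl
        · exact hxy.2 (quadMon_comm e y ▸ heM)
        · exact hyz.2 heM
    rcases mem_support_quadMon.mp hys with rfl | rfl
    · exact claim d hsM hle
    · exact claim c (quadMon_comm c y ▸ hsM) (quadMon_comm c y ▸ hle)

lemma cool_backward (M : Set (X →₀ ℕ)) (hq : ∀ m ∈ M, (m.sum fun _ e => e) = 2)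
    (o : GraphOrientation (GM M)) (hac : AcyclicOrientation o)
    (ht : ∀ y : X, quadMon y y ∉ M → TransAt o y) :
    ∃ r : LinearOrder X, Cool r M := by
  classical
  set r0 : X → X → Prop := fun a b => Relation.TransGen o.dir a b ∨ a = b with hr0
  haveI : IsPartialOrder X r0 :=
    { refl := fun a => Or.inr rfl
      trans := by
        intro a b c hab hbc
        rcases hab with hab | rfl
        · rcases hbc with hbc | rfl
          · exact Or.inl (hab.trans hbc)
          · exact Or.inl hab
        · exact hbc
      antisymm := by
        intro a b hab hba
        rcases hab with hab | rfl
        · rcases hba with hba | rfl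
          · exact absurd (hab.trans hba) (hac a)
          · rfl
        · rfl }
  obtain ⟨s, hlin, hrs⟩ := extend_partialOrder r0
  haveI := hlin
  letI r : LinearOrder X :=
    { le := s
      le_refl := refl_of s
      le_trans := fun _ _ _ => trans_of s
      le_antisymm := fun _ _ => antisymm_of s
      le_total := total_of s
      toDecidableLE := fun _ _ => Classical.propDecidable _ }
  have hdir_le : ∀ {a b : X}, o.dir a b → r.le a b := fun h =>
    hrs _ _ (Or.inl (Relation.TransGen.single h))
  refine ⟨r, ?_⟩
  intro w hwM x hint
  obtain ⟨a, b, rfl⟩ := quad_char (hq w hwM)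
  obtain ⟨⟨p, hp, hpx⟩, ⟨q, hq', hxq⟩⟩ := hint
  have hpq : p ≠ q := ne_of_lt (lt_trans hpx hxq)
  have hw : quadMon a b = quadMon p q := by
    rcases mem_support_quadMon.mp hp with rfl | rfl <;>
      rcases mem_support_quadMon.mp hq' with rfl | rfl
    · exact absurd rfl hpq
    · rfl
    · exact quadMon_comm q p
    · exact absurd rfl hpq
  rw [hw] at hwM ⊢
  by_cases hxx : quadMon x x ∈ M
  · refine ⟨quadMon x x, hxx, extremal_quadMon r x x, ?_⟩
    rw [erase_quadMon_self]
    exact Finsupp.le_def.mpr fun i => Nat.zero_le _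
  · have hxp : x ≠ p := (ne_of_lt hpx).symm
    have hxq' : x ≠ q := ne_of_lt hxq
    have hx : quadMon x p ∈ M ∨ quadMon x q ∈ M := by
      by_contra hc'
      push_neg at hc'
      have A1 : (GM M).Adj x p := ⟨hxp, hc'.1⟩
      have A2 : (GM M).Adj x q := ⟨hxq', hc'.2⟩
      have d1 : o.dir p x := by
        rcases o.total A1 with h | h
        · exact absurd (hdir_le h) (not_le_of_gt hpx)
        · exact h
      have d2 : o.dir x q := by
        rcases o.total A2 with h | h
        · exact h
        · exact absurd (hdir_le h) (not_le_of_gt hxq)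
      exact (o.dir_adj (ht x hxx p q d1 d2)).2 hwM
    rcases hx with h | h
    · refine ⟨quadMon x p, h, extremal_quadMon r x p, ?_⟩
      rw [erase_quadMon hxp]
      exact Finsupp.single_le_iff.mpr (one_le_quadMon_left p q)
    · refine ⟨quadMon x q, h, extremal_quadMon r x q, ?_⟩
      rw [erase_quadMon hxq']
      exact Finsupp.single_le_iff.mpr (one_le_quadMon_right p q)

/-- (a) A set `M` of quadratic monomials admits a cool order iff `G(M)` has an acyclic
orientation transitive at every vertex of `T_M = {x | x² ∉ M}`; (b) in particular, if
`M` is square-free, `M` admits a cool order iff `G(M)` has an acyclic orientation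
transitive at every vertex, i.e. `G(M)` is a comparability graph. -/
theorem stmt13 (M : Set (X →₀ ℕ)) (hq : ∀ m ∈ M, (m.sum fun _ e => e) = 2) :
    ((∃ r : LinearOrder X, Cool r M) ↔
      ∃ o : GraphOrientation (GM M), AcyclicOrientation o ∧
        ∀ y : X, quadMon y y ∉ M → TransAt o y) ∧
    ((∀ x : X, quadMon x x ∉ M) →
      ((∃ r : LinearOrder X, Cool r M) ↔
        ∃ o : GraphOrientation (GM M), AcyclicOrientation o ∧ ∀ y : X, TransAt o y)) := by
  constructor
  · constructor
    · rintro ⟨r, hc⟩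
      exact cool_forward M hq r hc
    · rintro ⟨o, hac, ht⟩
      exact cool_backward M hq o hac ht
  · intro hsf
    constructor
    · rintro ⟨r, hc⟩
      obtain ⟨o, hac, ht⟩ := cool_forward M hq r hc
      exact ⟨o, hac, fun y => ht y (hsf y)⟩
    · rintro ⟨o, hac, ht⟩
      exact cool_backward M hq o hac (fun y _ => ht y)
end

section
/- Let M be a set of quadratic monomials over X and define M' = { xy : x ≠ y, xy ∈ M } ∪ { x²y : x ≠ y, x² ∈ M and xy ∉ M }. Then a linear order on X is cool for M if and only if it is cool for M'. -/
variable {X : Type*}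

/-!
Let `x` be internal to a quadratic `w ∈ M`; then `w = cd` with `c ≺ x ≺ d`. A witness in `M`
is either `xv` with `v ≠ x`, which lies in `M'`, or the square `x²`; in the latter case `xc`
(if it lies in `M`) or else `x²c` is a witness in `M'`. Conversely, a witness `x²v ∈ M'` is
replaced by `x² ∈ M`, and a witness `u²x` is impossible since `u²` does not divide the
squarefree `w`. Internal letters `x` of the new cubes `a²b` are served in `M'` by `ax` or `a²x`.
-/

lemma Finsupp.erase_mono {α : Type*} [Zero α] [Preorder α] {f g : X →₀ α} (h : f ≤ g) (a : X) :
    f.erase a ≤ g.erase a := by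
  classical
  intro i
  simp only [Finsupp.erase_apply]
  split_ifs
  exacts [le_rfl, h i]

section Extremal

variable (r : LinearOrder X)

lemma extremalO_of_support_eq_pair {s : X →₀ ℕ} {x z : X} (hs : s.support = {x, z}) :
    ExtremalO r s x := by
  let _ := r
  refine ⟨by simp [hs], ?_⟩
  rcases le_total x z with h | h
  · exact Or.inl fun y hy => by
      rcases Finset.mem_insert.1 (hs ▸ hy) with rfl | hy
      exacts [le_rfl, (Finset.mem_singleton.1 hy) ▸ h]
  · exact Or.inr fun y hy => by
      rcases Finset.mem_insert.1 (hs ▸ hy) with rfl | hy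
      exacts [le_rfl, (Finset.mem_singleton.1 hy) ▸ h]

lemma InternalO.ne_of_support_subset_pair {w : X →₀ ℕ} {a b x : X}
    (hw : w.support ⊆ {a, b}) (hx : InternalO r w x) : a ≠ b ∧ x ≠ a ∧ x ≠ b := by
  let _ := r
  obtain ⟨⟨c, hc, hcx⟩, d, hd, hxd⟩ := hx
  have hc := hw hc
  have hd := hw hd
  simp only [Finset.mem_insert, Finset.mem_singleton] at hc hd
  have : c ≠ d := (hcx.trans hxd).ne
  refine ⟨?_, ?_, ?_⟩ <;> rintro rfl <;> rcases hc with rfl | rfl <;>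
    rcases hd with rfl | rfl <;> simp_all [lt_asymm hcx]

end Extremal

section QuadMon

lemma quadMon_self (x : X) : quadMon x x = Finsupp.single x 2 := by
  rw [quadMon, ← Finsupp.single_add]

lemma support_quadMon [DecidableEq X] (x y : X) : (quadMon x y).support = {x, y} := by
  rcases eq_or_ne x y with rfl | hxy
  · simp [quadMon_self]
  · exact Finsupp.support_single_add_single hxy one_ne_zero one_ne_zero

lemma quadMon_apply_le_one {a b : X} (hab : a ≠ b) (u : X) : quadMon a b u ≤ 1 := by
  classical
  simp only [quadMon, Finsupp.add_apply, Finsupp.single_apply]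
  split_ifs <;> simp_all

lemma exists_eq_quadMon {m : X →₀ ℕ} (hm : (m.sum fun _ e => e) = 2) :
    ∃ x y, m = quadMon x y := by
  classical
  obtain ⟨x, y, hxy⟩ := Multiset.card_eq_two.1 (m.card_toMultiset.trans hm)
  refine ⟨x, y, ?_⟩
  rw [← Finsupp.toMultiset_toFinsupp m, hxy, Multiset.insert_eq_cons, ← Multiset.singleton_add,
    Multiset.toFinsupp_add, Multiset.toFinsupp_singleton, Multiset.toFinsupp_singleton, quadMon]

lemma exists_eq_quadMon_of_mem_support {m : X →₀ ℕ} (hm : (m.sum fun _ e => e) = 2) {x : X}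
    (hx : x ∈ m.support) : ∃ y, m = quadMon x y := by
  classical
  obtain ⟨u, v, rfl⟩ := exists_eq_quadMon hm
  rw [support_quadMon, Finset.mem_insert, Finset.mem_singleton] at hx
  rcases hx with rfl | rfl
  exacts [⟨v, rfl⟩, ⟨u, quadMon_comm _ _⟩]

end QuadMon

/-- The set `M'` of the statement. -/
def splitSquares (M : Set (X →₀ ℕ)) : Set (X →₀ ℕ) :=
  {w | ∃ x y : X, x ≠ y ∧ quadMon x y ∈ M ∧ w = quadMon x y} ∪
    {w | ∃ x y : X, x ≠ y ∧ quadMon x x ∈ M ∧ quadMon x y ∉ M ∧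
      w = Finsupp.single x 2 + Finsupp.single y 1}

section SplitSquares

variable {M : Set (X →₀ ℕ)}

lemma quadMon_mem_splitSquares {x y : X} (hxy : x ≠ y) (h : quadMon x y ∈ M) :
    quadMon x y ∈ splitSquares M :=
  Or.inl ⟨x, y, hxy, h, rfl⟩

lemma exists_mem_splitSquares_of_sq_mem [DecidableEq X] {a b : X} (hab : a ≠ b)
    (ha : quadMon a a ∈ M) :
    ∃ s ∈ splitSquares M, s.support = {a, b} ∧ s ≤ Finsupp.single a 2 + Finsupp.single b 1 := by
  by_cases hM : quadMon a b ∈ M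
  · refine ⟨quadMon a b, quadMon_mem_splitSquares hab hM, support_quadMon a b, ?_⟩
    exact add_le_add_left (Finsupp.single_le_single.2 one_le_two) _
  · exact ⟨_, Or.inr ⟨a, b, hab, ha, hM, rfl⟩,
      Finsupp.support_single_add_single hab two_ne_zero one_ne_zero, le_rfl⟩

variable (r : LinearOrder X)

theorem cool_splitSquares (hq : ∀ m ∈ M, (m.sum fun _ e => e) = 2) (h : Cool r M) :
    Cool r (splitSquares M) := by
  classical
  intro w hw x hx
  rcases hw with ⟨a, b, hab, hM, rfl⟩ | ⟨a, b, hab, ha, -, rfl⟩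
  · obtain ⟨s, hs, hsx, hsw⟩ := h _ hM x hx
    obtain ⟨v, rfl⟩ := exists_eq_quadMon_of_mem_support (hq s hs) hsx.1
    rcases eq_or_ne x v with rfl | hxv
    · let _ := r
      obtain ⟨c, hc, hcx⟩ := hx.1
      obtain ⟨s', hs', hsupp, hle⟩ := exists_mem_splitSquares_of_sq_mem hcx.ne' hs
      refine ⟨s', hs', extremalO_of_support_eq_pair r hsupp, ?_⟩
      calc s'.erase x ≤ (Finsupp.single x 2 + Finsupp.single c 1).erase x :=
            Finsupp.erase_mono hle x
        _ = Finsupp.single c 1 := by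
          rw [Finsupp.erase_add, Finsupp.erase_single, Finsupp.erase_single_ne hcx.ne', zero_add]
        _ ≤ quadMon a b := Finsupp.single_le_iff.2 (Nat.one_le_iff_ne_zero.2 (by simpa using hc))
    · exact ⟨_, quadMon_mem_splitSquares hxv hs, hsx, hsw⟩
  · have hsupp := Finsupp.support_single_add_single (M := ℕ) hab two_ne_zero one_ne_zero
    obtain ⟨-, hxa, -⟩ := hx.ne_of_support_subset_pair r hsupp.subset
    obtain ⟨s', hs', hsupp', hle⟩ := exists_mem_splitSquares_of_sq_mem hxa.symm ha
    refine ⟨s', hs', extremalO_of_support_eq_pair r (hsupp'.trans (Finset.pair_comm a x)), ?_⟩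
    calc s'.erase x ≤ (Finsupp.single a 2 + Finsupp.single x 1).erase x :=
          Finsupp.erase_mono hle x
      _ = Finsupp.single a 2 := by
        rw [Finsupp.erase_add, Finsupp.erase_single_ne hxa, Finsupp.erase_single, add_zero]
      _ ≤ Finsupp.single a 2 + Finsupp.single b 1 := le_self_add

theorem cool_of_cool_splitSquares (hq : ∀ m ∈ M, (m.sum fun _ e => e) = 2)
    (h : Cool r (splitSquares M)) : Cool r M := by
  classical
  intro w hw x hx
  obtain ⟨a, b, rfl⟩ := exists_eq_quadMon (hq w hw)
  obtain ⟨hab, -⟩ := hx.ne_of_support_subset_pair r (support_quadMon a b).subset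
  obtain ⟨s, hs, hsx, hsw⟩ := h _ (quadMon_mem_splitSquares hab hw) x hx
  rcases hs with ⟨u, v, -, hM, rfl⟩ | ⟨u, v, huv, hu, -, rfl⟩
  · exact ⟨_, hM, hsx, hsw⟩
  have hx_mem := hsx.1
  rw [Finsupp.support_single_add_single huv two_ne_zero one_ne_zero, Finset.mem_insert,
    Finset.mem_singleton] at hx_mem
  rcases hx_mem with rfl | rfl
  · refine ⟨quadMon x x, hu, extremalO_of_support_eq_pair r (support_quadMon x x), ?_⟩
    simp [quadMon_self]
  · rw [Finsupp.erase_add, Finsupp.erase_single_ne huv.symm, Finsupp.erase_single,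
      add_zero] at hsw
    have := (Finsupp.single_le_iff.1 hsw).trans (quadMon_apply_le_one hab u)
    omega

end SplitSquares

/-- Replacing each pure square `x²` of a quadratic set `M` by the monomials `x²y` with
`xy ∉ M` preserves the cool orders. -/
theorem stmt15 (M : Set (X →₀ ℕ)) (hq : ∀ m ∈ M, (m.sum fun _ e => e) = 2)
    (r : LinearOrder X) :
    Cool r M ↔
      Cool r ({w | ∃ x y : X, x ≠ y ∧ quadMon x y ∈ M ∧ w = quadMon x y} ∪
        {w | ∃ x y : X, x ≠ y ∧ quadMon x x ∈ M ∧ quadMon x y ∉ M ∧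
          w = Finsupp.single x 2 + Finsupp.single y 1}) :=
  ⟨cool_splitSquares r hq, cool_of_cool_splitSquares r hq⟩
end

section
/- Let M be a finite subset of ℕⁿ and let I = { x ∈ ℕⁿ : ∃ m ∈ M, m ≤ x } be the ideal it generates (where ≤ is componentwise). The following are equivalent: (i) there exist a natural number k, a matrix A with k rows and n columns with entries in ℕ, and a vector w ∈ ℕ^k, such that I = { x ∈ ℕⁿ : A·x ≥ w componentwise }; (ii) I is the intersection of ℕⁿ with a convex subset of ℝⁿ; (iii) I = ℕⁿ ∩ (conv(M) + ℝ₊ⁿ), where conv(M) is the convex hull of M in ℝⁿ and ℝ₊ⁿ is the set of vectors in ℝⁿ with all coordinates nonnegative. -/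
/-!
The implications (i) ⇒ (ii) ⇒ (iii) ⇒ (ii) are soft: the orthant `ℝ₊ⁿ` is the convex hull of `ℕⁿ`,
so the convex hull of the image of `I` is `conv(M) + ℝ₊ⁿ`, and a convex set cutting out `I` contains
it.

For (iii) ⇒ (i) let `b` be the componentwise maximum of `M`. If `x ∉ I`, then `y = x ⊓ b ∉ I`
and `x` lies in the cylinder `{z | z i ≤ y i whenever y i < b i}`, which misses `I`. By (iii), `y` is
not in `conv(M)` plus the orthant of the coordinates with `y i < b i` (on the others every point of
`conv(M)` is already `≤ b = y`). A separating hyperplane, scaled up and rounded up, gives a row with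
natural coefficients supported on those coordinates that holds on `M`, hence on `I`, and fails on
the whole cylinder. The finitely many `y ≤ b` outside `I` give the rows of `A`.
-/

open scoped Pointwise

/-- The embedding of `ℕⁿ` into `ℝⁿ`. -/
def embR (n : ℕ) (x : Fin n → ℕ) : Fin n → ℝ := fun i => (x i : ℝ)

/-- The ideal of `ℕⁿ` generated by a finite set `M`. -/
def genIdeal (n : ℕ) (M : Finset (Fin n → ℕ)) : Set (Fin n → ℕ) := {x | ∃ m ∈ M, m ≤ x}

open Set Matrix

theorem nonneg_of_forall_lt_add_mul {u b r : ℝ} (h : ∀ t : ℝ, 0 ≤ t → u < b + t * r) :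
    0 ≤ r := by
  by_contra! hr
  have hb := h 0 le_rfl
  have ht := h ((b - u) / -r) (div_nonneg (by linarith) (by linarith))
  rw [div_mul_eq_mul_div, div_neg, mul_div_cancel_right₀ _ hr.ne] at ht
  linarith

section Finite

variable {ι : Type*} [Fintype ι]

theorem exists_dotProduct_lt_of_notMem_add_pi {P : Set (ι → ℝ)} (hP : Convex ℝ P)
    (hPc : IsCompact P) (S : Set ι) {y : ι → ℝ} (hy : y ∉ P + S.pi fun _ => Ici 0) :
    ∃ a : ι → ℝ, 0 ≤ a ∧ (∀ i ∉ S, a i = 0) ∧ ∀ p ∈ P, a ⬝ᵥ y < a ⬝ᵥ p := by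
  classical
  rcases P.eq_empty_or_nonempty with rfl | ⟨p₀, hp₀⟩
  · exact ⟨0, le_rfl, fun _ _ => rfl, by simp⟩
  set K : Set (ι → ℝ) := S.pi fun _ => Ici 0
  obtain ⟨f, u, hfy, hfP⟩ := geometric_hahn_banach_point_closed
    (hP.add (convex_pi fun _ _ => convex_Ici 0))
    ((isClosed_set_pi fun _ _ => isClosed_Ici).add_left_of_isCompact hPc) hy
  set a := (dotProductEquiv ℝ ι).symm (f : Module.Dual ℝ (ι → ℝ))
  have hfa : ∀ v, f v = a ⬝ᵥ v := fun v =>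
    (LinearMap.congr_fun ((dotProductEquiv ℝ ι).apply_symm_apply _) v).symm
  have haK : ∀ v ∈ K, 0 ≤ a ⬝ᵥ v := fun v hv => nonneg_of_forall_lt_add_mul fun t ht => by
    have hmem : p₀ + t • v ∈ P + K := add_mem_add hp₀ fun i hi => mul_nonneg ht (hv i hi)
    simpa [hfa, dotProduct_add] using hfP _ hmem
  have hsingle : ∀ i, Pi.single i (1 : ℝ) ∈ K := fun i j _ =>
    (Pi.single_nonneg.2 zero_le_one : (0 : ι → ℝ) ≤ Pi.single i 1) j
  have ha : 0 ≤ a := fun i => dotProduct_single_one a i ▸ haK _ (hsingle i)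
  refine ⟨a, ha, fun i hi => le_antisymm ?_ (ha i), fun p hp => ?_⟩
  · have hneg : -Pi.single i (1 : ℝ) ∈ K := fun j hj => by
      rw [mem_Ici, Pi.neg_apply, Pi.single_apply, if_neg (ne_of_mem_of_not_mem hj hi)]
      simp
    simpa [dotProduct_single_one] using haK _ hneg
  · have hzero : (0 : ι → ℝ) ∈ K := fun _ _ => self_mem_Ici
    rw [← hfa, ← hfa]
    exact hfy.trans (by simpa using hfP (p + 0) (add_mem_add hp hzero))

theorem exists_nat_dotProduct_lt_of_real {a : ι → ℝ} (ha : 0 ≤ a) (y : ι → ℕ)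
    (F : Finset (ι → ℕ)) (hF : ∀ m ∈ F, a ⬝ᵥ (Nat.cast ∘ y) < a ⬝ᵥ (Nat.cast ∘ m)) :
    ∃ c : ι → ℕ, (∀ i, a i = 0 → c i = 0) ∧ ∀ m ∈ F, c ⬝ᵥ y < c ⬝ᵥ m := by
  -- Rounding `N • a` up costs at most `∑ i, y i` on the side of `y` and nothing on that of `m`.
  obtain ⟨N, hN⟩ : ∃ N : ℕ, ∀ m ∈ F,
      ∑ i, (y i : ℝ) < N * (a ⬝ᵥ (Nat.cast ∘ m) - a ⬝ᵥ (Nat.cast ∘ y)) :=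
    ((Filter.eventually_all_finset F).2 fun m hm =>
      ((tendsto_natCast_atTop_atTop.atTop_mul_const (sub_pos.2 (hF m hm))).eventually_gt_atTop
        _)).exists
  refine ⟨fun i => ⌈N * a i⌉₊, fun i hi => by simp [hi], fun m hm => ?_⟩
  have hle : ∀ i, (N * a i : ℝ) ≤ ⌈N * a i⌉₊ := fun i => Nat.le_ceil _
  have hlt : ∀ i, (⌈N * a i⌉₊ : ℝ) < N * a i + 1 := fun i =>
    Nat.ceil_lt_add_one (mul_nonneg (Nat.cast_nonneg N) (ha i))
  have key : ((∑ i, ⌈N * a i⌉₊ * y i : ℕ) : ℝ) < ((∑ i, ⌈N * a i⌉₊ * m i : ℕ) : ℝ) := by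
    push_cast
    calc ∑ i, (⌈N * a i⌉₊ : ℝ) * y i
        ≤ ∑ i, (N * a i + 1) * y i :=
          Finset.sum_le_sum fun i _ => mul_le_mul_of_nonneg_right (hlt i).le (Nat.cast_nonneg _)
      _ = N * a ⬝ᵥ (Nat.cast ∘ y) + ∑ i, (y i : ℝ) := by
          simp only [dotProduct, Finset.mul_sum, add_mul, Finset.sum_add_distrib, one_mul,
            Function.comp_apply, mul_assoc]
      _ < N * a ⬝ᵥ (Nat.cast ∘ m) := by linarith [hN m hm]
      _ ≤ ∑ i, (⌈N * a i⌉₊ : ℝ) * m i := by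
          simp only [dotProduct, Finset.mul_sum, Function.comp_apply, ← mul_assoc]
          exact Finset.sum_le_sum fun i _ => mul_le_mul_of_nonneg_right (hle i) (Nat.cast_nonneg _)
  exact_mod_cast key

theorem exists_matrix_of_eq_setOf_forall_le_dotProduct {J : Type*} [Fintype J]
    {I : Set (ι → ℕ)} (c : J → ι → ℕ) (w : J → ℕ) (hI : I = {x | ∀ j, w j ≤ c j ⬝ᵥ x}) :
    ∃ (k : ℕ) (A : Matrix (Fin k) ι ℕ) (w' : Fin k → ℕ), I = {x | ∀ i, w' i ≤ (A *ᵥ x) i} := by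
  let e := Fintype.equivFin J
  refine ⟨Fintype.card J, Matrix.of fun i => c (e.symm i), w ∘ e.symm, ?_⟩
  rw [hI]
  ext x
  simp only [mem_ofPred_eq, Function.comp_apply]
  exact e.forall_congr_left

end Finite

section Ideal

variable {n : ℕ}

theorem embR_injective : Function.Injective (embR n) :=
  fun _ _ h => funext fun i => Nat.cast_injective (congrFun h i)

theorem image_embR_eq_range_inter_iff {I : Set (Fin n → ℕ)} {C : Set (Fin n → ℝ)} :
    embR n '' I = range (embR n) ∩ C ↔ ∀ x, x ∈ I ↔ embR n x ∈ C := by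
  refine ⟨fun h x => ?_, fun h => ?_⟩
  · rw [← embR_injective.mem_set_image, h]
    simp
  · ext y
    constructor
    · rintro ⟨x, hx, rfl⟩
      exact ⟨mem_range_self x, (h x).1 hx⟩
    · rintro ⟨⟨x, rfl⟩, hx⟩
      exact ⟨x, (h x).2 hx, rfl⟩

theorem exists_convex_of_eq_setOf_le_mulVec {I : Set (Fin n → ℕ)} {k : ℕ}
    (A : Matrix (Fin k) (Fin n) ℕ) (w : Fin k → ℕ) (hI : I = {x | ∀ i, w i ≤ (A *ᵥ x) i}) :
    ∃ C : Set (Fin n → ℝ), Convex ℝ C ∧ embR n '' I = range (embR n) ∩ C := by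
  refine ⟨(A.map ((↑) : ℕ → ℝ)).mulVecLin ⁻¹' Ici (Nat.cast ∘ w),
    (convex_Ici _).linear_preimage _, image_embR_eq_range_inter_iff.2 fun x => ?_⟩
  have hcast : ∀ i, ((A *ᵥ x) i : ℝ) = (A.map ((↑) : ℕ → ℝ) *ᵥ embR n x) i :=
    (Nat.castRingHom ℝ).map_mulVec A x
  simp only [hI, mem_ofPred_eq, mem_preimage, mulVecLin_apply, mem_Ici, Pi.le_def,
    Function.comp_apply, ← hcast, Nat.cast_le]

theorem Ici_zero_subset_convexHull_range_embR :
    Ici (0 : Fin n → ℝ) ⊆ convexHull ℝ (range (embR n)) := by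
  intro y hy
  rw [show range (embR n) = univ.pi fun _ => range ((↑) : ℕ → ℝ) from range_piMap _,
    convexHull_pi]
  intro i _
  have h₁ : (⌊y i⌋₊ : ℝ) ≤ y i := Nat.floor_le (hy i)
  have h₂ : y i ≤ ((⌊y i⌋₊ + 1 : ℕ) : ℝ) := by
    push_cast
    exact (Nat.lt_floor_add_one (y i)).le
  refine segment_subset_convexHull (mem_range_self ⌊y i⌋₊) (mem_range_self (⌊y i⌋₊ + 1)) ?_
  rw [segment_eq_Icc (h₁.trans h₂)]
  exact ⟨h₁, h₂⟩

theorem convexHull_image_genIdeal (M : Finset (Fin n → ℕ)) :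
    convexHull ℝ (embR n '' genIdeal n M) = convexHull ℝ (embR n '' M) + Ici 0 := by
  refine Subset.antisymm (convexHull_min ?_ ((convex_convexHull ℝ _).add (convex_Ici 0))) ?_
  · rintro _ ⟨x, ⟨m, hm, hmx⟩, rfl⟩
    refine ⟨embR n m, subset_convexHull ℝ _ ⟨m, hm, rfl⟩, embR n x - embR n m,
      fun i => sub_nonneg.2 (Nat.cast_le.2 (hmx i)), add_sub_cancel _ _⟩
  · calc convexHull ℝ (embR n '' M) + Ici 0
        ⊆ convexHull ℝ (embR n '' M) + convexHull ℝ (range (embR n)) :=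
          add_subset_add_left Ici_zero_subset_convexHull_range_embR
      _ = convexHull ℝ (embR n '' M + range (embR n)) := (convexHull_add _ _).symm
      _ ⊆ convexHull ℝ (embR n '' genIdeal n M) := by
          refine convexHull_mono ?_
          rintro _ ⟨_, ⟨m, hm, rfl⟩, _, ⟨x, rfl⟩, rfl⟩
          refine ⟨m + x, ⟨m, hm, le_self_add⟩, funext fun i => ?_⟩
          simp [embR]

theorem image_genIdeal_eq_of_convex {M : Finset (Fin n → ℕ)} {C : Set (Fin n → ℝ)}
    (hC : Convex ℝ C) (h : embR n '' genIdeal n M = range (embR n) ∩ C) :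
    embR n '' genIdeal n M = range (embR n) ∩ (convexHull ℝ (embR n '' M) + Ici 0) := by
  rw [← convexHull_image_genIdeal]
  refine Subset.antisymm (subset_inter (image_subset_range _ _) (subset_convexHull ℝ _)) ?_
  have hsub : embR n '' genIdeal n M ⊆ C := h ▸ inter_subset_right
  rintro y ⟨hy, hyC⟩
  rw [h]
  exact ⟨hy, convexHull_min hsub hC hyC⟩

theorem convexHull_image_embR_subset_Iic (M : Finset (Fin n → ℕ)) :
    convexHull ℝ (embR n '' M) ⊆ Iic (embR n (M.sup id)) :=
  convexHull_min (by rintro _ ⟨m, hm, rfl⟩ i; exact Nat.cast_le.2 (Finset.le_sup (f := id) hm i))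
    (convex_Iic _)

theorem exists_dotProduct_lt_of_notMem_genIdeal {M : Finset (Fin n → ℕ)}
    (hM : ∀ x, embR n x ∈ convexHull ℝ (embR n '' M) + Ici 0 → x ∈ genIdeal n M)
    {y : Fin n → ℕ} (hy : y ∉ genIdeal n M) :
    ∃ c : Fin n → ℕ, (∀ i, M.sup id i ≤ y i → c i = 0) ∧ ∀ m ∈ M, c ⬝ᵥ y < c ⬝ᵥ m := by
  set S : Set (Fin n) := {i | y i < M.sup id i}
  have hsep : embR n y ∉ convexHull ℝ (embR n '' M) + S.pi fun _ => Ici 0 := by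
    rintro ⟨p, hp, v, hv, hpv⟩
    refine hy (hM y ⟨p, hp, embR n y - p, fun i => sub_nonneg.2 ?_, add_sub_cancel _ _⟩)
    by_cases hi : i ∈ S
    · rw [← hpv]
      exact le_add_of_nonneg_right (hv i hi)
    · calc p i ≤ embR n (M.sup id) i := convexHull_image_embR_subset_Iic M hp i
        _ ≤ embR n y i := Nat.cast_le.2 (not_lt.1 hi)
  obtain ⟨a, ha, haS, hay⟩ := exists_dotProduct_lt_of_notMem_add_pi (convex_convexHull ℝ _)
    ((M.finite_toSet.image _).isCompact_convexHull (𝕜 := ℝ)) S hsep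
  obtain ⟨c, hc, hcy⟩ := exists_nat_dotProduct_lt_of_real ha y M
    fun m hm => hay _ (subset_convexHull ℝ _ ⟨m, hm, rfl⟩)
  exact ⟨c, fun i hi => hc i (haS i (not_lt.2 hi)), hcy⟩

theorem exists_matrix_of_image_genIdeal_eq {M : Finset (Fin n → ℕ)}
    (h : embR n '' genIdeal n M = range (embR n) ∩ (convexHull ℝ (embR n '' M) + Ici 0)) :
    ∃ (k : ℕ) (A : Matrix (Fin k) (Fin n) ℕ) (w : Fin k → ℕ),
      genIdeal n M = {x | ∀ i, w i ≤ (A *ᵥ x) i} := by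
  classical
  set J := (Finset.Iic (M.sup id)).filter (· ∉ genIdeal n M)
  choose c hcb hcM using fun y : J => exists_dotProduct_lt_of_notMem_genIdeal
    (fun x => (image_embR_eq_range_inter_iff.1 h x).2) (Finset.mem_filter.1 y.2).2
  refine exists_matrix_of_eq_setOf_forall_le_dotProduct c (fun y => c y ⬝ᵥ y + 1) ?_
  ext x
  refine ⟨fun ⟨m, hm, hmx⟩ y => (hcM y m hm).trans_le
    (dotProduct_le_dotProduct_of_nonneg_left hmx fun _ => Nat.zero_le _), fun hx => ?_⟩
  by_contra hxI
  set y := x ⊓ M.sup id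
  have hy : y ∈ J := Finset.mem_filter.2
    ⟨Finset.mem_Iic.2 inf_le_right, fun ⟨m, hm, hmy⟩ => hxI ⟨m, hm, hmy.trans inf_le_left⟩⟩
  have hrow : c ⟨y, hy⟩ ⬝ᵥ y + 1 ≤ c ⟨y, hy⟩ ⬝ᵥ x := hx ⟨y, hy⟩
  have heq : c ⟨y, hy⟩ ⬝ᵥ x = c ⟨y, hy⟩ ⬝ᵥ y := Finset.sum_congr rfl fun i _ => by
    by_cases hi : M.sup id i ≤ y i
    · rw [hcb ⟨y, hy⟩ i hi, zero_mul, zero_mul]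
    · simp only [y, Pi.inf_apply] at hi ⊢
      congr 1
      omega
  omega

end Ideal

/-- For the ideal `I` of `ℕⁿ` generated by a finite set `M`, the following are
equivalent: (i) `I = {x | A·x ≥ w}` for some nonnegative integer matrix `A` and vector
`w`; (ii) `I` is the intersection of `ℕⁿ` with a convex subset of `ℝⁿ`;
(iii) `I = ℕⁿ ∩ (conv(M) + ℝ₊ⁿ)`. -/
theorem stmt17 (n : ℕ) (M : Finset (Fin n → ℕ)) :
    ((∃ (k : ℕ) (A : Matrix (Fin k) (Fin n) ℕ) (w : Fin k → ℕ),
        genIdeal n M = {x : Fin n → ℕ | ∀ i, w i ≤ A.mulVec x i}) ↔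
      (∃ C : Set (Fin n → ℝ), Convex ℝ C ∧
        embR n '' genIdeal n M = Set.range (embR n) ∩ C)) ∧
    ((∃ C : Set (Fin n → ℝ), Convex ℝ C ∧
        embR n '' genIdeal n M = Set.range (embR n) ∩ C) ↔
      embR n '' genIdeal n M =
        Set.range (embR n) ∩
          (convexHull ℝ (embR n '' (↑M : Set (Fin n → ℕ))) +
            {y : Fin n → ℝ | ∀ i, 0 ≤ y i})) := by
  have orthant : {y : Fin n → ℝ | ∀ i, 0 ≤ y i} = Ici 0 := rfl
  rw [orthant]
  exact ⟨⟨fun ⟨_, A, w, hI⟩ => exists_convex_of_eq_setOf_le_mulVec A w hI,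
      fun ⟨_, hC, h⟩ => exists_matrix_of_image_genIdeal_eq (image_genIdeal_eq_of_convex hC h)⟩,
    ⟨fun ⟨_, hC, h⟩ => image_genIdeal_eq_of_convex hC h,
      fun h => ⟨_, (convex_convexHull ℝ _).add (convex_Ici 0), h⟩⟩⟩
end
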